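/- If the weight W satisfies the antisymmetry-about-average condition W(x,θ) − w₀(x) = w₀(x) − W(x,−θ), then for every compactly supported continuous f the symmetrized data satisfies (1/2)(P_W f(s,θ) + P_W f(−s,−θ)) = P_{w₀·f}(s,θ), the classical (unweighted) ray transform of the function x ↦ w₀(x) f(x). -/

import Mathlib

open MeasureTheory Real Filter

noncomputable section

/-- The plane `ℝ²` with the Euclidean norm. -/
abbrev R2 : Type := EuclideanSpace ℝ (Fin 2)

/-- The unit circle `S¹ ⊂ ℝ²`. -/
def S1 : Set R2 := Metric.sphere (0 : R2) 1

/-- The unit vector `(cos φ, sin φ)`, used to parametrize `S¹` by arc length. -/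
def dir (φ : ℝ) : R2 := (WithLp.equiv 2 (Fin 2 → ℝ)).symm ![Real.cos φ, Real.sin φ]

/-- `θ^⊥ = (-θ₂, θ₁)`, the rotation of `θ` by `π/2`. -/
def perp (θ : R2) : R2 := (WithLp.equiv 2 (Fin 2 → ℝ)).symm ![-(θ 1), θ 0]

/-- The weighted ray transform `P_W f (s, θ) = ∫_ℝ W(sθ^⊥ + tθ, θ) f(sθ^⊥ + tθ) dt`. -/
def rayT (W : R2 → R2 → ℂ) (f : R2 → ℂ) (s : ℝ) (θ : R2) : ℂ :=
  ∫ t : ℝ, W (s • perp θ + t • θ) θ * f (s • perp θ + t • θ)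

/-- The angular average `w₀(x) = (1/2π) ∫_{S¹} W(x,θ) dθ`, with `S¹` parametrized by
arc length as `φ ↦ (cos φ, sin φ)`, `φ ∈ [0, 2π]`. -/
def w0 (W : R2 → R2 → ℂ) (x : R2) : ℂ :=
  ((2 * Real.pi)⁻¹ : ℝ) • ∫ φ in (0:ℝ)..(2 * Real.pi), W x (dir φ)

/-- The principal value integral `p.v. ∫_ℝ q(t)/(s-t) dt`. -/
def pvInt (q : ℝ → ℂ) (s : ℝ) : ℂ :=
  limUnder (nhdsWithin (0:ℝ) (Set.Ioi 0))
    (fun ε => ∫ t in {t : ℝ | ε < |s - t|}, q t / ((s : ℂ) - (t : ℂ)))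

/-- The Hilbert transform `(1/π) p.v. ∫_ℝ q(t)/(s-t) dt`. -/
def hilbertT (q : ℝ → ℂ) (s : ℝ) : ℂ := ((Real.pi)⁻¹ : ℝ) • pvInt q s

/-- A smooth compactly supported (real-valued) test function on `ℝ²`. -/
def IsTestFun (φ : R2 → ℝ) : Prop := ContDiff ℝ (⊤ : ℕ∞) φ ∧ HasCompactSupport φ



lemma perp_neg (θ : R2) : perp (-θ) = -perp θ := by
  unfold perp
  ext i
  fin_cases i <;> simp [WithLp.equiv_symm_apply]

lemma norm_perp (θ : R2) : ‖perp θ‖ = ‖θ‖ := by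
  rw [EuclideanSpace.norm_eq, EuclideanSpace.norm_eq]
  congr 1
  rw [Fin.sum_univ_two, Fin.sum_univ_two]
  simp [perp, WithLp.equiv_symm_apply]
  ring

/-- Under the antisymmetry-about-average condition, the symmetrized data equals the
classical (unweighted) ray transform of `x ↦ w₀(x) f(x)`. -/
theorem stmt5 (W : R2 → R2 → ℂ) (hWc : Continuous fun p : R2 × R2 => W p.1 p.2)
    (hWb : ∃ C, ∀ x θ, ‖W x θ‖ ≤ C)
    (hsym : ∀ x : R2, ∀ θ ∈ S1, W x θ - w0 W x = w0 W x - W x (-θ))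
    (f : R2 → ℂ) (hf : Continuous f) (hfc : HasCompactSupport f) :
    ∀ s : ℝ, ∀ θ ∈ S1,
      (1/2 : ℂ) * (rayT W f s θ + rayT W f (-s) (-θ)) =
        ∫ t : ℝ, w0 W (s • perp θ + t • θ) * f (s • perp θ + t • θ) := by
  intro s θ hθ
  have hθn : ‖θ‖ = 1 := by simpa using mem_sphere_zero_iff_norm.mp hθ
  set g : ℝ → R2 := fun t => s • perp θ + t • θ with hgdef
  have hgc : Continuous g := by fun_prop
  obtain ⟨R, hR⟩ := hfc.isBounded.subset_closedBall 0
  have hgsupp : HasCompactSupport (fun t => f (g t)) := by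
    apply HasCompactSupport.intro (isCompact_closedBall (0:ℝ) (R + |s|))
    intro t ht
    have ht' : R + |s| < |t| := by
      have h0 := not_le.mp (fun h => ht (Metric.mem_closedBall.mpr h))
      simpa [Real.dist_eq] using h0
    have hnorm : R < ‖g t‖ := by
      have h1 : ‖t • θ‖ - ‖s • perp θ‖ ≤ ‖g t‖ := by
        have := norm_sub_norm_le (t • θ) (-(s • perp θ))
        simpa [hgdef, sub_neg_eq_add, add_comm] using this
      have h2 : ‖t • θ‖ = |t| := by simp [norm_smul, hθn]
      have h3 : ‖s • perp θ‖ = |s| := by simp [norm_smul, norm_perp, hθn]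
      rw [h2, h3] at h1
      linarith
    have : g t ∉ tsupport f := fun h => absurd (hR h) (by
      simp only [Metric.mem_closedBall, dist_zero_right]; exact not_le.mpr hnorm)
    exact image_eq_zero_of_notMem_tsupport this
  have hA : Integrable (fun t => W (g t) θ * f (g t)) := by
    apply Continuous.integrable_of_hasCompactSupport
    · exact (hWc.comp (hgc.prodMk continuous_const)).mul (hf.comp hgc)
    · exact hgsupp.mul_left
  have hB : Integrable (fun t => W (g t) (-θ) * f (g t)) := by
    apply Continuous.integrable_of_hasCompactSupport
    · exact (hWc.comp (hgc.prodMk continuous_const)).mul (hf.comp hgc)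
    · exact hgsupp.mul_left
  have hray2 : rayT W f (-s) (-θ) = ∫ t : ℝ, W (g t) (-θ) * f (g t) := by
    have hvec : ∀ t : ℝ, (-s) • perp (-θ) + t • (-θ) = g (-t) := by
      intro t
      simp [hgdef, perp_neg, smul_neg, neg_smul]
    unfold rayT
    rw [show (fun t : ℝ => W ((-s) • perp (-θ) + t • (-θ)) (-θ) *
          f ((-s) • perp (-θ) + t • (-θ))) = fun t => W (g (-t)) (-θ) * f (g (-t)) by
        funext t; rw [hvec t]]
    exact (integral_neg_eq_self (fun t => W (g t) (-θ) * f (g t)) volume)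
  have hray1 : rayT W f s θ = ∫ t : ℝ, W (g t) θ * f (g t) := rfl
  rw [hray1, hray2, ← integral_add hA hB, ← integral_const_mul]
  apply integral_congr_ae
  filter_upwards with t
  have h := hsym (g t) θ hθ
  have : W (g t) θ + W (g t) (-θ) = 2 * w0 W (g t) := by linear_combination h
  linear_combination (f (g t) / 2) * this
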